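/- arXiv:2010.05303 — 2 statements merged into one kernel-verified Lean document; each statement's English description precedes it below -/
import Mathlib

section
/- Let X, Y, Z be points in H³ such that the segments XY and YZ each have length at least D > 3, and the angle ∠XYZ at Y is at least δ for some δ > π/4. Then the angle ∠YXZ at X (between the segments XY and XZ) satisfies ∠YXZ ≤ 20·e^{-|XY|}. -/
/-- Inverse hyperbolic cosine. -/
noncomputable def arcosh (x : ℝ) : ℝ := Real.log (x + Real.sqrt (x ^ 2 - 1))

/-- Hyperbolic distance between two points of the upper half-space model of `H³`
(points of `ℝ × ℝ × ℝ` with positive third coordinate), given by the standard formula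
`cosh d = 1 + ‖p - q‖² / (2 zₚ z_q)`. -/
noncomputable def hDist (p q : ℝ × ℝ × ℝ) : ℝ :=
  arcosh (1 + ((p.1 - q.1) ^ 2 + (p.2.1 - q.2.1) ^ 2 + (p.2.2 - q.2.2) ^ 2) /
    (2 * p.2.2 * q.2.2))

/-- The hyperbolic angle `∠XYZ` at the vertex `Y`, recovered from the side lengths of the
triangle `XYZ` via the hyperbolic law of cosines. -/
noncomputable def hAngle (X Y Z : ℝ × ℝ × ℝ) : ℝ :=
  Real.arccos ((Real.cosh (hDist Y X) * Real.cosh (hDist Y Z) - Real.cosh (hDist X Z)) /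
    (Real.sinh (hDist Y X) * Real.sinh (hDist Y Z)))

/-! The law of cosines at `Y` shows that an angle `∠XYZ > π/4` forces
`cosh |XZ| > cosh |XY| cosh |YZ| / 4`; so the side `XZ` is long and the angle at `X` is acute.
By the law of sines `sin ∠YXZ = sin ∠XYZ · sinh |YZ| / sinh |XZ| ≤ 5 / cosh |XY| ≤ 10 e^{-|XY|}`,
and Jordan's inequality `∠YXZ ≤ (π/2) sin ∠YXZ` gives `∠YXZ ≤ 5π e^{-|XY|} ≤ 20 e^{-|XY|}`. -/

open Real

lemma hDist_comm (p q : ℝ × ℝ × ℝ) : hDist p q = hDist q p := by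
  unfold hDist
  congr 2
  ring

lemma hDist_nonneg {p q : ℝ × ℝ × ℝ} (hp : 0 < p.2.2) (hq : 0 < q.2.2) : 0 ≤ hDist p q :=
  Real.arcosh_nonneg (le_add_of_nonneg_right (by positivity))

noncomputable def angleOpposite (a b c : ℝ) : ℝ :=
  arccos ((cosh b * cosh c - cosh a) / (sinh b * sinh c))

-- `sinh² b sinh² c - (cosh b cosh c - cosh a)²`, in a form visibly symmetric in `a, b, c`:
-- this symmetry is the law of sines.
noncomputable def gramCosh (a b c : ℝ) : ℝ :=
  1 - cosh a ^ 2 - cosh b ^ 2 - cosh c ^ 2 + 2 * cosh a * cosh b * cosh c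

lemma sin_angleOpposite_mul {a b c : ℝ} (hb : 0 < b) (hc : 0 < c) :
    sin (angleOpposite a b c) * (sinh b * sinh c) = √(gramCosh a b c) := by
  have hbc : 0 < sinh b * sinh c := mul_pos (sinh_pos_iff.2 hb) (sinh_pos_iff.2 hc)
  have hgram : gramCosh a b c = (sinh b * sinh c) ^ 2 - (cosh b * cosh c - cosh a) ^ 2 := by
    rw [gramCosh, mul_pow, sinh_sq, sinh_sq]
    ring
  rw [angleOpposite, sin_arccos, hgram, ← sqrt_sq hbc.le, ← sqrt_mul' _ (sq_nonneg _),
    sqrt_sq hbc.le]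
  congr 1
  field_simp

theorem sin_angleOpposite_mul_sinh {a b c : ℝ} (ha : 0 < a) (hb : 0 < b) (hc : 0 < c) :
    sin (angleOpposite a c b) * sinh b = sin (angleOpposite b c a) * sinh a := by
  have hc' : 0 < sinh c := sinh_pos_iff.2 hc
  apply mul_right_cancel₀ hc'.ne'
  calc sin (angleOpposite a c b) * sinh b * sinh c
      = sin (angleOpposite a c b) * (sinh c * sinh b) := by ring
    _ = sin (angleOpposite b c a) * (sinh c * sinh a) := by
      rw [sin_angleOpposite_mul hc hb, sin_angleOpposite_mul hc ha]
      congr 1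
      unfold gramCosh
      ring
    _ = sin (angleOpposite b c a) * sinh a * sinh c := by ring

lemma cosh_mul_cosh_lt_of_pi_div_four_lt {a b c : ℝ} (hb : 0 < b) (hc : 0 < c)
    (hangle : π / 4 < angleOpposite a b c) : cosh b * cosh c < 4 * cosh a := by
  have hbc : 0 < sinh b * sinh c := mul_pos (sinh_pos_iff.2 hb) (sinh_pos_iff.2 hc)
  have hcos : (cosh b * cosh c - cosh a) / (sinh b * sinh c) < √2 / 2 := by
    by_contra! h
    have hle := arccos_le_arccos h
    rw [← cos_pi_div_four, arccos_cos (by positivity) (by linarith [pi_pos])] at hle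
    exact hle.not_gt hangle
  have hsqrt2 : √2 / 2 < 3 / 4 := by
    nlinarith [sq_sqrt (zero_le_two : (0 : ℝ) ≤ 2), sqrt_nonneg 2]
  have hsinh : sinh b * sinh c ≤ cosh b * cosh c :=
    mul_le_mul (sinh_lt_cosh b).le (sinh_lt_cosh c).le (sinh_pos_iff.2 hc).le (cosh_pos b).le
  rw [div_lt_iff₀ hbc] at hcos
  nlinarith

lemma angleOpposite_le_pi_div_two {a b c : ℝ} (hb : 0 < b) (hc : 0 < c)
    (h : cosh a ≤ cosh b * cosh c) : angleOpposite a b c ≤ π / 2 :=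
  arccos_le_pi_div_two.2 <|
    div_nonneg (sub_nonneg.2 h) (mul_pos (sinh_pos_iff.2 hb) (sinh_pos_iff.2 hc)).le

lemma five_le_cosh_of_three_le {x : ℝ} (hx : 3 ≤ x) : 5 ≤ cosh x := by
  have htaylor := sum_le_exp_of_nonneg (by linarith : 0 ≤ x) 4
  simp only [Finset.sum_range_succ, Finset.sum_range_zero, Nat.factorial] at htaylor
  rw [cosh_eq]
  nlinarith [exp_pos (-x)]

lemma le_pi_div_two_mul_sin {x : ℝ} (hx : 0 ≤ x) (hx' : x ≤ π / 2) : x ≤ π / 2 * sin x := by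
  have h := mul_le_sin hx hx'
  rw [div_mul_eq_mul_div, div_le_iff₀ pi_pos] at h
  linarith

theorem angleOpposite_le_twenty_mul_exp_neg {a b c : ℝ} (ha : 3 < a) (hb : 0 ≤ b) (hc : 3 < c)
    (hangle : π / 4 < angleOpposite b c a) : angleOpposite a c b ≤ 20 * exp (-c) := by
  have ha0 : 0 < a := by linarith
  have hc0 : 0 < c := by linarith
  have ha5 := five_le_cosh_of_three_le ha.le
  have hc5 := five_le_cosh_of_three_le hc.le
  have hcosh_b : cosh c * cosh a < 4 * cosh b :=
    cosh_mul_cosh_lt_of_pi_div_four_lt hc0 ha0 hangle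
  have hb_pos : 0 < b := hb.lt_of_ne' fun h => by rw [h, cosh_zero] at hcosh_b; nlinarith
  have hsinh_b : cosh c * cosh a ≤ 5 * sinh b := by
    have hdiff : cosh b - sinh b ≤ 1 := by rw [cosh_sub_sinh]; exact exp_le_one_iff.2 (by linarith)
    nlinarith
  have hsinX : 0 ≤ sin (angleOpposite a c b) :=
    sin_nonneg_of_nonneg_of_le_pi (arccos_nonneg _) (arccos_le_pi _)
  have hsin : sin (angleOpposite a c b) * cosh c ≤ 5 := by
    have hsines := sin_angleOpposite_mul_sinh ha0 hb_pos hc0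
    have hsinY : sin (angleOpposite b c a) * sinh a ≤ cosh a :=
      (mul_le_of_le_one_left (sinh_pos_iff.2 ha0).le (sin_le_one _)).trans
        (sinh_lt_cosh a).le
    nlinarith
  have hsin_exp : sin (angleOpposite a c b) * exp c ≤ 10 := by
    have hexp : exp c ≤ 2 * cosh c := by rw [cosh_eq]; linarith [exp_pos (-c)]
    nlinarith [mul_le_mul_of_nonneg_left hexp hsinX]
  have hright : angleOpposite a c b ≤ π / 2 :=
    angleOpposite_le_pi_div_two hc0 hb_pos
      (by nlinarith [mul_le_mul_of_nonneg_right hc5 (cosh_pos a).le,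
        mul_le_mul_of_nonneg_right hc5 (cosh_pos b).le])
  calc angleOpposite a c b ≤ π / 2 * sin (angleOpposite a c b) :=
        le_pi_div_two_mul_sin (arccos_nonneg _) hright
    _ ≤ 20 * exp (-c) := by
      rw [exp_neg, ← div_eq_mul_inv, le_div_iff₀ (exp_pos c)]
      nlinarith [mul_le_mul_of_nonneg_left hsin_exp pi_pos.le, pi_le_four]

theorem angle_estimate_far_vertex_general
    (D δ : ℝ) (hD : 3 < D) (hδ : Real.pi / 4 < δ)
    (X Y Z : ℝ × ℝ × ℝ) (hX : 0 < X.2.2) (hZ : 0 < Z.2.2)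
    (hXY : D ≤ hDist X Y) (hYZ : D ≤ hDist Y Z)
    (hangle : δ ≤ hAngle X Y Z) :
    hAngle Y X Z ≤ 20 * Real.exp (-(hDist X Y)) := by
  have hangleY : π / 4 < angleOpposite (hDist X Z) (hDist X Y) (hDist Y Z) := by
    rw [hDist_comm X Y]
    exact hδ.trans_le hangle
  exact angleOpposite_le_twenty_mul_exp_neg (hD.trans_le hYZ) (hDist_nonneg hX hZ)
    (hD.trans_le hXY) hangleY

/-- Let `X, Y, Z ∈ H³` with `|XY|, |YZ| ≥ D > 3` and `∠XYZ ≥ δ` for some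
`δ > π/4`.  Then the angle `∠YXZ` at `X` satisfies `∠YXZ ≤ 20 e^{-|XY|}`. -/
theorem angle_estimate_far_vertex
    (D δ : ℝ) (hD : 3 < D) (hδ : Real.pi / 4 < δ)
    (X Y Z : ℝ × ℝ × ℝ) (hX : 0 < X.2.2) (hY : 0 < Y.2.2) (hZ : 0 < Z.2.2)
    (hXY : D ≤ hDist X Y) (hYZ : D ≤ hDist Y Z)
    (hangle : δ ≤ hAngle X Y Z) :
    hAngle Y X Z ≤ 20 * Real.exp (-(hDist X Y)) :=
  angle_estimate_far_vertex_general D δ hD hδ X Y Z hX hZ hXY hYZ hangle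
end

section
/- Let γ be an isometry of H³ that translates a geodesic line l by distance L₁ > 0 along itself (with no rotation needed for this estimate). Let z ∈ H³ be a point with d(z, γz) = L₂, where 0 ≤ L₂ - L₁ ≤ 1/400 and L₁ ≥ 10 ln 2. If D = d(z, l), then cosh(L₂) ≥ (cosh(L₁) - 1)·cosh²(D) + 1, and consequently D ≤ √(2(e^{L₂ - L₁} - 1)) < 1/10. -/
open Real Set

theorem one_add_sq_div_two_le_cosh (x : ℝ) : 1 + x ^ 2 / 2 ≤ cosh x := by
  rw [← cosh_abs, ← sq_abs]
  have hsinh : |x| / 2 ≤ sinh (|x| / 2) := self_le_sinh_iff.mpr (by positivity)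
  have hcosh : cosh |x| = 1 + 2 * sinh (|x| / 2) ^ 2 := by
    rw [← mul_div_cancel₀ |x| two_ne_zero, cosh_two_mul, cosh_sq]; ring_nf
  nlinarith [hsinh, abs_nonneg x]

theorem cosh_add_sub_one_le {x h : ℝ} (hx : 3 ≤ exp x) (hh : 0 ≤ h) :
    cosh (x + h) - 1 ≤ exp h ^ 2 * (cosh x - 1) := by
  have hY : 1 ≤ exp h := one_le_exp hh
  rw [cosh_eq, cosh_eq, exp_neg, exp_neg, exp_add]
  set X := exp x
  set Y := exp h
  -- the quadratic equals `(X - 1)(X - 3)` at `Y = 1` and increases for `Y ≥ 1` once `X ≥ 3`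
  have hquad : 0 ≤ (X - 1) ^ 2 * Y ^ 2 - (2 * X - 1) * Y + 1 := by
    have hslope : 0 ≤ (X - 1) ^ 2 * (Y + 1) - (2 * X - 1) := by nlinarith
    nlinarith [mul_nonneg (sub_nonneg.mpr hY) hslope,
      mul_nonneg (by linarith : 0 ≤ X - 1) (sub_nonneg.mpr hx)]
  have hX : 0 < X := by positivity
  have hY0 : 0 < Y := by positivity
  rw [← sub_nonneg]
  have expand : Y ^ 2 * ((X + X⁻¹) / 2 - 1) - ((X * Y + (X * Y)⁻¹) / 2 - 1) =
      (Y - 1) * ((X - 1) ^ 2 * Y ^ 2 - (2 * X - 1) * Y + 1) / (2 * X * Y) := by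
    field_simp; ring
  rw [expand]
  exact div_nonneg (mul_nonneg (by linarith) hquad) (by positivity)

theorem le_sqrt_two_mul_exp_sub_one {L₁ L₂ D : ℝ} (hL₁ : 3 ≤ exp L₁) (hL : 0 ≤ L₂ - L₁)
    (h : (cosh L₁ - 1) * cosh D ^ 2 + 1 ≤ cosh L₂) :
    D ≤ √(2 * (exp (L₂ - L₁) - 1)) := by
  have hcosh₁ : 1 < cosh L₁ := one_lt_cosh.mpr (by
    rintro rfl; norm_num at hL₁)
  have hgrowth := cosh_add_sub_one_le hL₁ hL
  rw [add_sub_cancel] at hgrowth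
  have hcoshD : cosh D ≤ exp (L₂ - L₁) := by
    refine (pow_le_pow_iff_left₀ (cosh_pos D).le (exp_pos _).le two_ne_zero).mp ?_
    refine le_of_mul_le_mul_left ?_ (sub_pos.mpr hcosh₁)
    nlinarith
  apply le_sqrt_of_sq_le
  nlinarith [one_add_sq_div_two_le_cosh D]

theorem sqrt_two_mul_exp_sub_one_lt {δ : ℝ} (hδ : δ ≤ 1 / 400) :
    √(2 * (exp δ - 1)) < 1 / 10 := by
  have hexp : exp δ * (1 - δ) ≤ 1 := by
    have := add_one_le_exp (-δ)
    rw [exp_neg] at this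
    have := mul_le_mul_of_nonneg_left this (exp_pos δ).le
    rw [mul_inv_cancel₀ (exp_pos δ).ne'] at this
    linarith
  rw [sqrt_lt' (by norm_num)]
  nlinarith [exp_pos δ]

theorem isLeast_range_mul_cosh_add_mul_sinh {a b : ℝ} (ha : 0 < a) (hab : b ^ 2 < a ^ 2) :
    IsLeast (range fun t => a * cosh t + b * sinh t) √(a ^ 2 - b ^ 2) := by
  set c := √(a ^ 2 - b ^ 2)
  have hc : 0 < c := sqrt_pos.mpr (by linarith)
  have hc2 : c ^ 2 = a ^ 2 - b ^ 2 := sq_sqrt (by linarith)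
  refine ⟨⟨arsinh (-b / c), ?_⟩, ?_⟩
  · have hcosh : cosh (arsinh (-b / c)) = a / c := by
      rw [cosh_arsinh, ← sqrt_sq (div_pos ha hc).le]
      congr 1
      field_simp
      linarith
    simp only [hcosh, sinh_arsinh]
    field_simp
    linarith
  · rintro _ ⟨t, rfl⟩
    dsimp only
    have hpos : 0 < a * cosh t + b * sinh t := by
      have hprod : (a * cosh t + b * sinh t) * (a * cosh t - b * sinh t) =
          a ^ 2 + (a ^ 2 - b ^ 2) * sinh t ^ 2 := by
        linear_combination a ^ 2 * cosh_sq t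
      nlinarith [mul_pos ha (cosh_pos t), sq_nonneg (sinh t)]
    rw [← abs_of_pos hpos, ← sqrt_sq_eq_abs]
    apply sqrt_le_sqrt
    nlinarith [sq_nonneg (a * sinh t + b * cosh t), cosh_sq t]

theorem eq_of_forall_mul_cosh_add_mul_sinh_eq {p q p' q' : ℝ}
    (h : ∀ s, p * cosh s + q * sinh s = p' * cosh s + q' * sinh s) : p = p' ∧ q = q' := by
  have h₀ := h 0
  simp only [cosh_zero, sinh_zero, mul_one, mul_zero, add_zero] at h₀
  subst h₀
  exact ⟨rfl, mul_right_cancel₀ (sinh_pos_iff.mpr one_pos).ne' (by linarith [h 1])⟩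

def minkowski : LinearMap.BilinForm ℝ (ℝ × ℝ × ℝ × ℝ) :=
  LinearMap.mk₂ ℝ (fun p q => p.1 * q.1 - p.2.1 * q.2.1 - p.2.2.1 * q.2.2.1 - p.2.2.2 * q.2.2.2)
    (fun _ _ _ => by simp only [Prod.fst_add, Prod.snd_add]; ring)
    (fun _ _ _ => by simp only [Prod.smul_fst, Prod.smul_snd, smul_eq_mul]; ring)
    (fun _ _ _ => by simp only [Prod.fst_add, Prod.snd_add]; ring)
    (fun _ _ _ => by simp only [Prod.smul_fst, Prod.smul_snd, smul_eq_mul]; ring)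

theorem minkowski_apply (p q : ℝ × ℝ × ℝ × ℝ) :
    minkowski p q = p.1 * q.1 - p.2.1 * q.2.1 - p.2.2.1 * q.2.2.1 - p.2.2.2 * q.2.2.2 := rfl

theorem minkowski_comm (p q : ℝ × ℝ × ℝ × ℝ) : minkowski p q = minkowski q p := by
  simp only [minkowski_apply]; ring

theorem minkowski_self_neg_of_orthogonal {A G : ℝ × ℝ × ℝ × ℝ} (hA : 0 < minkowski A A)
    (hGA : minkowski G A = 0) (hG : G ≠ 0) : minkowski G G < 0 := by
  obtain ⟨a₀, a₁, a₂, a₃⟩ := A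
  obtain ⟨g₀, g₁, g₂, g₃⟩ := G
  simp only [minkowski_apply] at *
  by_contra! hGG
  have hcauchy : (g₁ * a₁ + g₂ * a₂ + g₃ * a₃) ^ 2 ≤
      (g₁ ^ 2 + g₂ ^ 2 + g₃ ^ 2) * (a₁ ^ 2 + a₂ ^ 2 + a₃ ^ 2) := by
    nlinarith [sq_nonneg (g₁ * a₂ - g₂ * a₁), sq_nonneg (g₁ * a₃ - g₃ * a₁),
      sq_nonneg (g₂ * a₃ - g₃ * a₂)]
  have hg₀ : g₀ ^ 2 * (a₀ * a₀ - a₁ * a₁ - a₂ * a₂ - a₃ * a₃) ≤ 0 := by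
    have hdot : g₀ * a₀ = g₁ * a₁ + g₂ * a₂ + g₃ * a₃ := by linarith
    calc g₀ ^ 2 * (a₀ * a₀ - a₁ * a₁ - a₂ * a₂ - a₃ * a₃)
        = (g₀ * a₀) ^ 2 - g₀ ^ 2 * (a₁ ^ 2 + a₂ ^ 2 + a₃ ^ 2) := by ring
      _ ≤ (g₁ ^ 2 + g₂ ^ 2 + g₃ ^ 2 - g₀ ^ 2) * (a₁ ^ 2 + a₂ ^ 2 + a₃ ^ 2) := by
        rw [hdot]; linarith
      _ ≤ 0 := mul_nonpos_of_nonpos_of_nonneg (by linarith) (by positivity)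
  obtain rfl : g₀ = 0 := pow_eq_zero_iff two_ne_zero |>.mp <|
    le_antisymm (nonpos_of_mul_nonpos_left hg₀ hA) (sq_nonneg g₀)
  apply hG
  simp only [Prod.mk_eq_zero, true_and]
  refine ⟨?_, ?_, ?_⟩ <;> nlinarith [sq_nonneg g₁, sq_nonneg g₂, sq_nonneg g₃]

theorem minkowski_self_le_sq_sub_sq {A V : ℝ × ℝ × ℝ × ℝ} (hAA : minkowski A A = 1)
    (hAV : minkowski A V = 0) (hVV : minkowski V V = -1) (X : ℝ × ℝ × ℝ × ℝ) :
    minkowski X X ≤ minkowski X A ^ 2 - minkowski X V ^ 2 := by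
  set R := X - minkowski X A • A + minkowski X V • V
  have hVA : minkowski V A = 0 := by rw [minkowski_comm, hAV]
  have hRA : minkowski R A = 0 := by
    simp only [R, map_add, map_sub, map_smul, LinearMap.add_apply, LinearMap.sub_apply,
      LinearMap.smul_apply, smul_eq_mul, hAA, hVA]
    ring
  have hRR : minkowski R R ≤ 0 := by
    rcases eq_or_ne R 0 with h | h
    · simp [h]
    · exact (minkowski_self_neg_of_orthogonal (by rw [hAA]; exact one_pos) hRA h).le
  have hRR' : minkowski R R = minkowski X X - minkowski X A ^ 2 + minkowski X V ^ 2 := by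
    simp only [R, map_add, map_sub, map_smul, LinearMap.add_apply, LinearMap.sub_apply,
      LinearMap.smul_apply, smul_eq_mul, hAA, hAV, hVA, hVV, minkowski_comm A X,
      minkowski_comm V X]
    ring
  linarith

theorem cosh_sub_one_mul_add_one_le_minkowski {A V Z W : ℝ × ℝ × ℝ × ℝ} {L : ℝ}
    (hAA : minkowski A A = 1) (hAV : minkowski A V = 0) (hVV : minkowski V V = -1)
    (hZ : minkowski Z Z = 1) (hW : minkowski W W = 1)
    (hWZ : ∀ s, minkowski W (cosh s • A + sinh s • V) =
      minkowski Z (cosh (s - L) • A + sinh (s - L) • V)) :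
    (cosh L - 1) * (minkowski Z A ^ 2 - minkowski Z V ^ 2) + 1 ≤ minkowski Z W := by
  set a := minkowski Z A
  set b := minkowski Z V
  obtain ⟨hWA, hWV⟩ : minkowski W A = a * cosh L - b * sinh L ∧
      minkowski W V = b * cosh L - a * sinh L := by
    refine eq_of_forall_mul_cosh_add_mul_sinh_eq fun s => ?_
    have := hWZ s
    simp only [map_add, map_smul, smul_eq_mul, cosh_sub, sinh_sub] at this
    linear_combination this
  have hZW := minkowski_self_le_sq_sub_sq hAA hAV hVV (Z - W)
  simp only [map_sub, LinearMap.sub_apply, hZ, hW, hWA, hWV, minkowski_comm W Z] at hZW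
  linear_combination hZW / 2 + (a ^ 2 - b ^ 2) / 2 * cosh_sq_sub_sinh_sq L

theorem exists_eq_cosh_smul_add_sinh_smul {F : ℝ → ℝ × ℝ × ℝ × ℝ}
    (hF : ∀ s t, minkowski (F s) (F t) = cosh (s - t)) :
    ∃ A V, minkowski A A = 1 ∧ minkowski A V = 0 ∧ minkowski V V = -1 ∧
      ∀ t, F t = cosh t • A + sinh t • V := by
  set A := F 0
  set V := (sinh 1)⁻¹ • (F 1 - cosh 1 • A) with hV
  have hs1 : sinh 1 ≠ 0 := (sinh_pos_iff.mpr one_pos).ne'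
  have hFA : ∀ t, minkowski (F t) A = cosh t := fun t => by rw [hF, sub_zero]
  have hFV : ∀ t, minkowski (F t) V = -sinh t := fun t => by
    simp only [V, map_smul, map_sub, smul_eq_mul, hF, hFA, cosh_sub]
    field_simp
    ring
  have hAA : minkowski A A = 1 := by rw [hFA, cosh_zero]
  have hAV : minkowski A V = 0 := by rw [hFV, sinh_zero, neg_zero]
  have hVV : minkowski V V = -1 := by
    nth_rw 1 [hV]
    simp only [map_smul, map_sub, LinearMap.smul_apply, LinearMap.sub_apply, smul_eq_mul,
      hFV, hAV, mul_zero, sub_zero]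
    field_simp
  refine ⟨A, V, hAA, hAV, hVV, fun t => ?_⟩
  set G := F t - (cosh t • A + sinh t • V)
  have hGA : minkowski G A = 0 := by
    simp only [G, map_sub, map_add, map_smul, LinearMap.sub_apply, LinearMap.add_apply,
      LinearMap.smul_apply, smul_eq_mul, hFA, hAA, minkowski_comm V A, hAV]
    ring
  have hGG : minkowski G G = 0 := by
    simp only [G, map_sub, map_add, map_smul, LinearMap.sub_apply, LinearMap.add_apply,
      LinearMap.smul_apply, smul_eq_mul, hF, hFA, hFV, hAA, hAV, hVV, minkowski_comm A (F t),
      minkowski_comm V (F t), minkowski_comm V A, sub_self, cosh_zero]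
    linear_combination -cosh_sq_sub_sinh_sq t
  by_contra hne
  exact (minkowski_self_neg_of_orthogonal (by rw [hAA]; exact one_pos) hGA
    (sub_ne_zero.mpr hne)).ne hGG

/-- The standard isometry from the upper half-space onto the hyperboloid `⟪x, x⟫ = 1, x₀ > 0`. -/
noncomputable def toHyperboloid (p : ℝ × ℝ × ℝ) : ℝ × ℝ × ℝ × ℝ :=
  ((p.1 ^ 2 + p.2.1 ^ 2 + p.2.2 ^ 2 + 1) / (2 * p.2.2), p.1 / p.2.2, p.2.1 / p.2.2,
    (p.1 ^ 2 + p.2.1 ^ 2 + p.2.2 ^ 2 - 1) / (2 * p.2.2))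

theorem minkowski_toHyperboloid {p q : ℝ × ℝ × ℝ} (hp : 0 < p.2.2) (hq : 0 < q.2.2) :
    minkowski (toHyperboloid p) (toHyperboloid q) =
      1 + ((p.1 - q.1) ^ 2 + (p.2.1 - q.2.1) ^ 2 + (p.2.2 - q.2.2) ^ 2) / (2 * p.2.2 * q.2.2) := by
  simp only [minkowski_apply, toHyperboloid]
  field_simp
  ring

theorem hDist_eq_arcosh_minkowski {p q : ℝ × ℝ × ℝ} (hp : 0 < p.2.2) (hq : 0 < q.2.2) :
    hDist p q = Real.arcosh (minkowski (toHyperboloid p) (toHyperboloid q)) := by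
  rw [minkowski_toHyperboloid hp hq]
  rfl

theorem one_le_minkowski_toHyperboloid {p q : ℝ × ℝ × ℝ} (hp : 0 < p.2.2) (hq : 0 < q.2.2) :
    1 ≤ minkowski (toHyperboloid p) (toHyperboloid q) := by
  rw [minkowski_toHyperboloid hp hq, le_add_iff_nonneg_right]
  positivity

theorem cosh_hDist {p q : ℝ × ℝ × ℝ} (hp : 0 < p.2.2) (hq : 0 < q.2.2) :
    cosh (hDist p q) = minkowski (toHyperboloid p) (toHyperboloid q) := by
  rw [hDist_eq_arcosh_minkowski hp hq, cosh_arcosh (one_le_minkowski_toHyperboloid hp hq)]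

theorem minkowski_toHyperboloid_self {p : ℝ × ℝ × ℝ} (hp : 0 < p.2.2) :
    minkowski (toHyperboloid p) (toHyperboloid p) = 1 := by
  simp [minkowski_toHyperboloid hp hp]

theorem cosh_sq_sInf_hDist_range {A V : ℝ × ℝ × ℝ × ℝ} (hAA : minkowski A A = 1)
    (hAV : minkowski A V = 0) (hVV : minkowski V V = -1) {f : ℝ → ℝ × ℝ × ℝ}
    (hf : ∀ t, 0 < (f t).2.2) (hfAV : ∀ t, toHyperboloid (f t) = cosh t • A + sinh t • V)
    {z : ℝ × ℝ × ℝ} (hz : 0 < z.2.2) :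
    cosh (sInf (hDist z '' range f)) ^ 2 =
      minkowski (toHyperboloid z) A ^ 2 - minkowski (toHyperboloid z) V ^ 2 := by
  set a := minkowski (toHyperboloid z) A
  set b := minkowski (toHyperboloid z) V
  have hdist : ∀ t, hDist z (f t) = Real.arcosh (a * cosh t + b * sinh t) := fun t => by
    rw [hDist_eq_arcosh_minkowski hz (hf t), hfAV, map_add, map_smul, map_smul, smul_eq_mul,
      smul_eq_mul, mul_comm a, mul_comm b]
  have ha : 1 ≤ a := by
    simpa [hfAV] using one_le_minkowski_toHyperboloid hz (hf 0)
  have hab : 1 ≤ a ^ 2 - b ^ 2 := by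
    simpa [minkowski_toHyperboloid_self hz] using
      minkowski_self_le_sq_sub_sq hAA hAV hVV (toHyperboloid z)
  have hleast := isLeast_range_mul_cosh_add_mul_sinh (a := a) (b := b) (by linarith) (by linarith)
  have hc : 1 ≤ √(a ^ 2 - b ^ 2) := one_le_sqrt.mpr hab
  have hmono : MonotoneOn Real.arcosh (range fun t => a * cosh t + b * sinh t) :=
    strictMonoOn_arcosh.monotoneOn.mono fun _ hx => by
      simpa using lt_of_lt_of_le one_pos (hc.trans (hleast.2 hx))
  have himage : hDist z '' range f = Real.arcosh '' range fun t => a * cosh t + b * sinh t := by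
    rw [← range_comp, ← range_comp]
    exact congrArg range (funext hdist)
  rw [himage, (hmono.map_isLeast hleast).csInf_eq, cosh_arcosh hc, sq_sqrt (by linarith)]

theorem dist_to_axis_small_general
    (L₁ L₂ D : ℝ) (hL₁ : 10 * Real.log 2 ≤ L₁)
    (h1 : 0 ≤ L₂ - L₁) (h2 : L₂ - L₁ ≤ 1 / 400)
    (φ : ℝ × ℝ × ℝ → ℝ × ℝ × ℝ)
    (hφpos : ∀ p, 0 < p.2.2 → 0 < (φ p).2.2)
    (hφiso : ∀ p q, 0 < p.2.2 → 0 < q.2.2 → hDist (φ p) (φ q) = hDist p q)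
    (f : ℝ → ℝ × ℝ × ℝ) (hf : ∀ t, 0 < (f t).2.2)
    (hfiso : ∀ s t, hDist (f s) (f t) = |s - t|)
    (htrans : ∀ t, φ (f t) = f (t + L₁))
    (z : ℝ × ℝ × ℝ) (hz : 0 < z.2.2)
    (hL₂ : hDist z (φ z) = L₂)
    (hD : D = sInf (hDist z '' Set.range f)) :
    (Real.cosh L₁ - 1) * Real.cosh D ^ 2 + 1 ≤ Real.cosh L₂ ∧
    D ≤ Real.sqrt (2 * (Real.exp (L₂ - L₁) - 1)) ∧
    Real.sqrt (2 * (Real.exp (L₂ - L₁) - 1)) < 1 / 10 := by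
  obtain ⟨A, V, hAA, hAV, hVV, hfAV⟩ :=
    exists_eq_cosh_smul_add_sinh_smul (F := fun t => toHyperboloid (f t)) fun s t => by
      rw [← cosh_hDist (hf s) (hf t), hfiso, cosh_abs]
  have hφz := hφpos z hz
  have hshift : ∀ s, minkowski (toHyperboloid (φ z)) (cosh s • A + sinh s • V) =
      minkowski (toHyperboloid z) (cosh (s - L₁) • A + sinh (s - L₁) • V) := fun s => by
    rw [← hfAV, ← hfAV, ← cosh_hDist hφz (hf s), ← cosh_hDist hz (hf _),
      ← hφiso z _ hz (hf _), htrans, sub_add_cancel]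
  have hmain : (cosh L₁ - 1) * cosh D ^ 2 + 1 ≤ cosh L₂ := by
    rw [hD, cosh_sq_sInf_hDist_range hAA hAV hVV hf hfAV hz, ← hL₂, cosh_hDist hz hφz]
    exact cosh_sub_one_mul_add_one_le_minkowski hAA hAV hVV (minkowski_toHyperboloid_self hz)
      (minkowski_toHyperboloid_self hφz) hshift
  have hexp : 3 ≤ exp L₁ := by linarith [add_one_le_exp L₁, log_two_gt_d9]
  exact ⟨hmain, le_sqrt_two_mul_exp_sub_one hexp h1 hmain, sqrt_two_mul_exp_sub_one_lt h2⟩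

/-- Let `γ = φ` be an isometry of `H³` translating a geodesic line
`l = range f` by distance `L₁ > 0` along itself, and let `z` be a point with
`d(z, φ z) = L₂`, where `0 ≤ L₂ - L₁ ≤ 1/400` and `L₁ ≥ 10 ln 2`.  If `D = d(z, l)`, then
`cosh L₂ ≥ (cosh L₁ - 1) cosh² D + 1`, and consequently
`D ≤ √(2 (e^{L₂ - L₁} - 1)) < 1/10`. -/
theorem dist_to_axis_small
    (L₁ L₂ D : ℝ) (hL₁pos : 0 < L₁) (hL₁ : 10 * Real.log 2 ≤ L₁)
    (h1 : 0 ≤ L₂ - L₁) (h2 : L₂ - L₁ ≤ 1 / 400)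
    (φ : ℝ × ℝ × ℝ → ℝ × ℝ × ℝ)
    (hφpos : ∀ p, 0 < p.2.2 → 0 < (φ p).2.2)
    (hφiso : ∀ p q, 0 < p.2.2 → 0 < q.2.2 → hDist (φ p) (φ q) = hDist p q)
    (f : ℝ → ℝ × ℝ × ℝ) (hf : ∀ t, 0 < (f t).2.2)
    (hfiso : ∀ s t, hDist (f s) (f t) = |s - t|)
    (htrans : ∀ t, φ (f t) = f (t + L₁))
    (z : ℝ × ℝ × ℝ) (hz : 0 < z.2.2)
    (hL₂ : hDist z (φ z) = L₂)
    (hD : D = sInf (hDist z '' Set.range f)) :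
    (Real.cosh L₁ - 1) * Real.cosh D ^ 2 + 1 ≤ Real.cosh L₂ ∧
    D ≤ Real.sqrt (2 * (Real.exp (L₂ - L₁) - 1)) ∧
    Real.sqrt (2 * (Real.exp (L₂ - L₁) - 1)) < 1 / 10 :=
  dist_to_axis_small_general L₁ L₂ D hL₁ h1 h2 φ hφpos hφiso f hf hfiso htrans z hz hL₂ hD
end
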